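/- Let d, s', n be positive integers, r > 0, A ∈ ℝ^{d×d}, and W_v ∈ ℝ^{s'×d}. Define single-head self-attention f : ℝ^{d×n} → ℝ^{s'×n} by f(X)_{:,l} = Σ_{j=1}^n σ(X^T A X_{:,l})_j · W_v X_{:,j}, where σ(z)_j = exp(z_j)/Σ_i exp(z_i) is the softmax. Then for all X, X' ∈ ℝ^{d×n} with ‖X‖_F ≤ r and ‖X'‖_F ≤ r, ‖f(X) − f(X')‖_F ≤ √3 · ‖W_v‖₂ · √( ‖A‖₂² r⁴ (4n + 1) + n ) · ‖X − X'‖_F. -/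

import Mathlib

open Finset

/-- Softmax of a real vector. -/
noncomputable def softmax {n : ℕ} (z : Fin n → ℝ) : Fin n → ℝ :=
  fun j => Real.exp (z j) / ∑ l, Real.exp (z l)

/-- Single-head self-attention of a query `x` within a context `X`, with score matrix
`A = Wₖᵀ W_q` and value matrix `Wv`: `∑ⱼ σ(Xᵀ A x)ⱼ • Wv X_{:,j}`. -/
noncomputable def satt {d s' : ℕ} (A : Matrix (Fin d) (Fin d) ℝ)
    (Wv : Matrix (Fin s') (Fin d) ℝ) {m : ℕ}
    (x : Fin d → ℝ) (X : Matrix (Fin d) (Fin m) ℝ) : Fin s' → ℝ :=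
  ∑ j, softmax (fun j' => dotProduct (fun i => X i j') (A.mulVec x)) j •
    Wv.mulVec (fun i => X i j)

/-- Frobenius norm of a real matrix. -/
noncomputable def frob {d m : ℕ} (A : Matrix (Fin d) (Fin m) ℝ) : ℝ :=
  Real.sqrt (∑ i, ∑ j, (A i j) ^ 2)

/-- Euclidean norm of a real vector. -/
noncomputable def eucNorm {n : ℕ} (v : Fin n → ℝ) : ℝ :=
  Real.sqrt (∑ i, v i ^ 2)

/-- Spectral (ℓ²-operator) norm of a real matrix. -/
noncomputable def specNorm {a b : ℕ} (W : Matrix (Fin a) (Fin b) ℝ) : ℝ :=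
  sSup {c : ℝ | ∃ x : Fin b → ℝ, eucNorm x ≤ 1 ∧ c = eucNorm (W.mulVec x)}

/-! ### Auxiliary lemmas -/

lemma eucNorm_eq_norm {n : ℕ} (v : Fin n → ℝ) :
    eucNorm v = ‖(WithLp.equiv 2 (Fin n → ℝ)).symm v‖ := by
  rw [EuclideanSpace.norm_eq, eucNorm]
  congr 1; apply Finset.sum_congr rfl; intro i _
  rw [Real.norm_eq_abs, sq_abs]; rfl

lemma eucNorm_nonneg' {n : ℕ} (v : Fin n → ℝ) : 0 ≤ eucNorm v := Real.sqrt_nonneg _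

lemma eucNorm_zero' {n : ℕ} : eucNorm (0 : Fin n → ℝ) = 0 := by
  simp [eucNorm]

lemma eucNorm_smul' {n : ℕ} (c : ℝ) (v : Fin n → ℝ) :
    eucNorm (c • v) = |c| * eucNorm v := by
  rw [eucNorm_eq_norm, eucNorm_eq_norm]
  have : (WithLp.equiv 2 (Fin n → ℝ)).symm (c • v) =
      c • (WithLp.equiv 2 (Fin n → ℝ)).symm v := rfl
  rw [this, norm_smul, Real.norm_eq_abs]

lemma eucNorm_add_le' {n : ℕ} (u v : Fin n → ℝ) :
    eucNorm (u + v) ≤ eucNorm u + eucNorm v := by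
  rw [eucNorm_eq_norm, eucNorm_eq_norm, eucNorm_eq_norm]
  have : (WithLp.equiv 2 (Fin n → ℝ)).symm (u + v) =
      (WithLp.equiv 2 (Fin n → ℝ)).symm u + (WithLp.equiv 2 (Fin n → ℝ)).symm v := rfl
  rw [this]; exact norm_add_le _ _

lemma eucNorm_sq' {n : ℕ} (v : Fin n → ℝ) : eucNorm v ^ 2 = ∑ i, v i ^ 2 := by
  rw [eucNorm, Real.sq_sqrt]; positivity

lemma frob_nonneg' {d m : ℕ} (A : Matrix (Fin d) (Fin m) ℝ) : 0 ≤ frob A := Real.sqrt_nonneg _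

-- Cauchy-Schwarz: eucNorm (M.mulVec v) ≤ frob M * eucNorm v
lemma eucNorm_mulVec_le_frob {d m : ℕ} (M : Matrix (Fin d) (Fin m) ℝ) (v : Fin m → ℝ) :
    eucNorm (M.mulVec v) ≤ frob M * eucNorm v := by
  have h : ∀ i, (M.mulVec v i)^2 ≤ (∑ j, (M i j)^2) * (∑ j, (v j)^2) := fun i =>
    Finset.sum_mul_sq_le_sq_mul_sq univ (fun j => M i j) v
  have h2 : ∑ i, (M.mulVec v i)^2 ≤ (∑ i, ∑ j, (M i j)^2) * (∑ j, (v j)^2) := by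
    rw [Finset.sum_mul]
    exact Finset.sum_le_sum fun i _ => h i
  calc eucNorm (M.mulVec v) = Real.sqrt (∑ i, (M.mulVec v i)^2) := rfl
    _ ≤ Real.sqrt ((∑ i, ∑ j, (M i j)^2) * (∑ j, (v j)^2)) := Real.sqrt_le_sqrt h2
    _ = frob M * eucNorm v := by
        rw [Real.sqrt_mul (by positivity)]; rfl

lemma specNorm_bddAbove {a b : ℕ} (W : Matrix (Fin a) (Fin b) ℝ) :
    BddAbove {c : ℝ | ∃ x : Fin b → ℝ, eucNorm x ≤ 1 ∧ c = eucNorm (W.mulVec x)} := by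
  refine ⟨frob W, ?_⟩
  rintro c ⟨x, hx, rfl⟩
  calc eucNorm (W.mulVec x) ≤ frob W * eucNorm x := eucNorm_mulVec_le_frob W x
    _ ≤ frob W * 1 := mul_le_mul_of_nonneg_left hx (frob_nonneg' W)
    _ = frob W := mul_one _

lemma specNorm_nonneg' {a b : ℕ} (W : Matrix (Fin a) (Fin b) ℝ) : 0 ≤ specNorm W := by
  apply le_csSup (specNorm_bddAbove W)
  exact ⟨0, by simp [eucNorm_zero'], by simp [Matrix.mulVec_zero, eucNorm_zero']⟩

lemma eucNorm_mulVec_le {a b : ℕ} (W : Matrix (Fin a) (Fin b) ℝ) (x : Fin b → ℝ) :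
    eucNorm (W.mulVec x) ≤ specNorm W * eucNorm x := by
  rcases eq_or_ne (eucNorm x) 0 with h0 | h0
  · have hx0 : x = 0 := by
      have hs : ∑ i, x i ^ 2 = 0 := by
        have := eucNorm_sq' x
        rw [h0] at this; simpa using this.symm
      have hnn : ∀ j ∈ univ, (0:ℝ) ≤ x j ^ 2 := fun j _ => sq_nonneg _
      funext i
      have := (Finset.sum_eq_zero_iff_of_nonneg hnn).mp hs i (mem_univ i)
      exact pow_eq_zero_iff two_ne_zero |>.mp this
    subst hx0
    simp [Matrix.mulVec_zero, eucNorm_zero', h0]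
  · have hpos : 0 < eucNorm x := lt_of_le_of_ne (eucNorm_nonneg' x) (Ne.symm h0)
    have key : eucNorm (W.mulVec ((eucNorm x)⁻¹ • x)) ≤ specNorm W := by
      apply le_csSup (specNorm_bddAbove W)
      refine ⟨(eucNorm x)⁻¹ • x, ?_, rfl⟩
      rw [eucNorm_smul', abs_of_pos (by positivity), inv_mul_cancel₀ h0]
    rw [Matrix.mulVec_smul, eucNorm_smul', abs_of_pos (by positivity)] at key
    calc eucNorm (W.mulVec x) = eucNorm x * ((eucNorm x)⁻¹ * eucNorm (W.mulVec x)) := by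
          field_simp
      _ ≤ eucNorm x * specNorm W := by
          apply mul_le_mul_of_nonneg_left _ (le_of_lt hpos)
          linarith [key]
      _ = specNorm W * eucNorm x := mul_comm _ _

/-! ### Softmax lemmas -/

lemma sum_exp_pos {n : ℕ} (hn : 0 < n) (z : Fin n → ℝ) : 0 < ∑ l, Real.exp (z l) :=
  Finset.sum_pos (fun _ _ => Real.exp_pos _) ⟨⟨0, hn⟩, mem_univ _⟩

lemma softmax_nonneg {n : ℕ} (z : Fin n → ℝ) (j : Fin n) : 0 ≤ softmax z j := by
  have := sum_exp_pos (j.pos) z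
  exact div_nonneg (Real.exp_pos _).le this.le

lemma softmax_le_one {n : ℕ} (z : Fin n → ℝ) (j : Fin n) : softmax z j ≤ 1 := by
  have hS := sum_exp_pos (j.pos) z
  simp only [softmax]; rw [div_le_one hS]
  exact Finset.single_le_sum (fun l _ => (Real.exp_pos _).le) (mem_univ j)

lemma softmax_sum_one {n : ℕ} (hn : 0 < n) (z : Fin n → ℝ) : ∑ j, softmax z j = 1 := by
  simp only [softmax]
  rw [← Finset.sum_div]
  exact div_self (sum_exp_pos hn z).ne'

lemma eucNorm_softmax_le_one {n : ℕ} (hn : 0 < n) (z : Fin n → ℝ) :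
    eucNorm (softmax z) ≤ 1 := by
  rw [eucNorm]
  rw [show (1:ℝ) = Real.sqrt 1 from (Real.sqrt_one).symm]
  apply Real.sqrt_le_sqrt
  calc ∑ j, softmax z j ^ 2 ≤ ∑ j, softmax z j := by
        apply Finset.sum_le_sum
        intro j _
        nlinarith [softmax_nonneg z j, softmax_le_one z j]
    _ = 1 := softmax_sum_one hn z

-- derivative of softmax along a line
lemma softmax_line_hasDerivAt {n : ℕ} (v w : Fin n → ℝ) (t : ℝ) (j : Fin n) :
    HasDerivAt (fun s => softmax (fun l => v l + s * w l) j)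
      (softmax (fun l => v l + t * w l) j *
        (w j - ∑ l, softmax (fun l' => v l' + t * w l') l * w l)) t := by
  have hS : (0:ℝ) < ∑ l, Real.exp (v l + t * w l) := sum_exp_pos j.pos _
  have hnum : ∀ k : Fin n, HasDerivAt (fun s => Real.exp (v k + s * w k))
      (Real.exp (v k + t * w k) * w k) t := by
    intro k
    have := (((hasDerivAt_id t).mul_const (w k)).const_add (v k)).exp
    simpa using this
  have hden : HasDerivAt (fun s => ∑ l, Real.exp (v l + s * w l))
      (∑ l, Real.exp (v l + t * w l) * w l) t :=
    HasDerivAt.fun_sum (fun l _ => hnum l)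
  have h := (hnum j).div hden hS.ne'
  refine h.congr_deriv ?_
  have hsum : ∑ l, softmax (fun l' => v l' + t * w l') l * w l
      = (∑ l, Real.exp (v l + t * w l) * w l) / (∑ l, Real.exp (v l + t * w l)) := by
    simp only [softmax]
    rw [Finset.sum_div]
    exact Finset.sum_congr rfl fun l _ => by ring
  rw [hsum]
  simp only [softmax]
  field_simp

lemma softmax_lipschitz {n : ℕ} (hn : 0 < n) (u v : Fin n → ℝ) :
    eucNorm (fun j => softmax u j - softmax v j) ≤ eucNorm (fun j => u j - v j) := by
  set w : Fin n → ℝ := fun l => u l - v l with hw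
  set F : ℝ → EuclideanSpace ℝ (Fin n) := fun t =>
    (WithLp.equiv 2 (Fin n → ℝ)).symm (softmax (fun l => v l + t * w l)) with hF
  set G : ℝ → EuclideanSpace ℝ (Fin n) := fun t =>
    (WithLp.equiv 2 (Fin n → ℝ)).symm (fun j => softmax (fun l => v l + t * w l) j *
      (w j - ∑ l, softmax (fun l' => v l' + t * w l') l * w l)) with hG
  have hderiv : ∀ t : ℝ, HasDerivAt F (G t) t := by
    intro t
    have hpi : HasDerivAt (fun s => softmax (fun l => v l + s * w l))
        (fun j => softmax (fun l => v l + t * w l) j *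
          (w j - ∑ l, softmax (fun l' => v l' + t * w l') l * w l)) t :=
      hasDerivAt_pi.mpr (fun j => softmax_line_hasDerivAt v w t j)
    exact ((PiLp.continuousLinearEquiv 2 ℝ
      (fun _ : Fin n => ℝ)).symm.toContinuousLinearMap.hasFDerivAt).comp_hasDerivAt t hpi
  have hbound : ∀ t : ℝ, ‖G t‖ ≤ eucNorm w := by
    intro t
    set p : Fin n → ℝ := softmax (fun l => v l + t * w l) with hp
    set m : ℝ := ∑ l, p l * w l with hm
    have hGnorm : ‖G t‖ = eucNorm (fun j => p j * (w j - m)) := (eucNorm_eq_norm _).symm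
    have hsq : (eucNorm (fun j => p j * (w j - m)))^2 ≤ (eucNorm w)^2 := by
      rw [eucNorm_sq', eucNorm_sq']
      have h1 : ∑ j, p j = 1 := softmax_sum_one hn _
      have step1 : ∑ j, (p j * (w j - m))^2 ≤ ∑ j, p j * (w j - m)^2 := by
        apply Finset.sum_le_sum
        intro j _
        have h0 : 0 ≤ p j := softmax_nonneg _ j
        have hle : p j ≤ 1 := softmax_le_one _ j
        have : (p j)^2 ≤ p j := by nlinarith
        calc (p j * (w j - m))^2 = (p j)^2 * (w j - m)^2 := by ring
          _ ≤ p j * (w j - m)^2 := mul_le_mul_of_nonneg_right this (sq_nonneg _)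
      have step2 : ∑ j, p j * (w j - m)^2 = (∑ j, p j * w j^2) - m^2 := by
        have he : ∀ j ∈ univ, p j * (w j - m)^2
            = p j * w j^2 - 2*m*(p j * w j) + m^2 * p j := fun j _ => by ring
        rw [Finset.sum_congr rfl he, Finset.sum_add_distrib, Finset.sum_sub_distrib,
          ← Finset.mul_sum, ← Finset.mul_sum, h1, ← hm]
        ring
      have step3 : ∑ j, p j * w j^2 ≤ ∑ j, w j^2 := by
        apply Finset.sum_le_sum
        intro j _
        have hle : p j ≤ 1 := softmax_le_one _ j
        nlinarith [sq_nonneg (w j), softmax_nonneg (fun l => v l + t * w l) j]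
      nlinarith [sq_nonneg m]
    rw [hGnorm]
    have h2 : 0 ≤ eucNorm (fun j => p j * (w j - m)) := Real.sqrt_nonneg _
    have h3 : 0 ≤ eucNorm w := Real.sqrt_nonneg _
    nlinarith
  have key := norm_image_sub_le_of_norm_deriv_le_segment'
    (f := F) (f' := G) (C := eucNorm w) (a := 0) (b := 1)
    (fun x _ => (hderiv x).hasDerivWithinAt)
    (fun x _ => hbound x) 1 (by constructor <;> norm_num)
  have hF1 : F 1 = (WithLp.equiv 2 (Fin n → ℝ)).symm (softmax u) := by
    simp only [hF]
    congr 1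
    funext l
    simp [hw]
  have hF0 : F 0 = (WithLp.equiv 2 (Fin n → ℝ)).symm (softmax v) := by
    simp only [hF]
    congr 1
    funext l
    simp
  rw [hF1, hF0] at key
  have hnorm : ‖(WithLp.equiv 2 (Fin n → ℝ)).symm (softmax u)
      - (WithLp.equiv 2 (Fin n → ℝ)).symm (softmax v)‖
      = eucNorm (fun j => softmax u j - softmax v j) := by
    rw [eucNorm_eq_norm]
    rfl
  rw [hnorm] at key
  linarith

/-! ### Matrix lemmas -/

lemma satt_eq {d s' m : ℕ} (A : Matrix (Fin d) (Fin d) ℝ) (Wv : Matrix (Fin s') (Fin d) ℝ)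
    (x : Fin d → ℝ) (X : Matrix (Fin d) (Fin m) ℝ) :
    satt A Wv x X = Wv.mulVec (X.mulVec
      (softmax (fun j' => dotProduct (fun i => X i j') (A.mulVec x)))) := by
  funext i
  simp only [satt, Finset.sum_apply, Pi.smul_apply, smul_eq_mul, Matrix.mulVec,
    dotProduct, Finset.mul_sum]
  rw [Finset.sum_comm]
  exact Finset.sum_congr rfl fun k _ => Finset.sum_congr rfl fun j _ => by ring

lemma frob_transpose {d m : ℕ} (A : Matrix (Fin d) (Fin m) ℝ) : frob A.transpose = frob A := by
  simp only [frob, Matrix.transpose_apply]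
  rw [Finset.sum_comm]

lemma col_le_frob {d m : ℕ} (X : Matrix (Fin d) (Fin m) ℝ) (l : Fin m) :
    eucNorm (fun i => X i l) ≤ frob X := by
  apply Real.sqrt_le_sqrt
  apply Finset.sum_le_sum
  intro i _
  exact Finset.single_le_sum (fun j _ => sq_nonneg (X i j)) (mem_univ l)

lemma frob_sq_eq_sum_col {d m : ℕ} (M : Matrix (Fin d) (Fin m) ℝ) :
    frob M ^ 2 = ∑ l, (eucNorm (fun i => M i l)) ^ 2 := by
  rw [frob, Real.sq_sqrt (by positivity), Finset.sum_comm]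
  exact Finset.sum_congr rfl fun l _ => by
    rw [eucNorm, Real.sq_sqrt (by positivity)]

lemma zdiff_eq {d m : ℕ} (X X' : Matrix (Fin d) (Fin m) ℝ) (u u' : Fin d → ℝ) :
    (fun j => dotProduct (fun i => X i j) u - dotProduct (fun i => X' i j) u')
    = (X - X').transpose.mulVec u + X'.transpose.mulVec (fun i => u i - u' i) := by
  funext j
  simp only [Pi.add_apply, Matrix.mulVec, dotProduct, Matrix.transpose_apply,
    Matrix.sub_apply]
  rw [← Finset.sum_add_distrib, ← Finset.sum_sub_distrib]
  exact Finset.sum_congr rfl fun i _ => by ring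

/-- Proposition 1 of the paper (Castin et al.): single-head self-attention restricted to
the Frobenius ball of radius `r` is Lipschitz with constant
`√3 ‖Wv‖₂ √(‖A‖₂² r⁴ (4n + 1) + n)`. -/
theorem self_attention_lipschitz_bound
    (d s' n : ℕ) (hd : 0 < d) (hs' : 0 < s') (hn : 0 < n) (r : ℝ) (hr : 0 < r)
    (A : Matrix (Fin d) (Fin d) ℝ) (Wv : Matrix (Fin s') (Fin d) ℝ)
    (X X' : Matrix (Fin d) (Fin n) ℝ) (hX : frob X ≤ r) (hX' : frob X' ≤ r) :
    frob (Matrix.of (fun i l => satt A Wv (fun i' => X i' l) X i) -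
          Matrix.of (fun i l => satt A Wv (fun i' => X' i' l) X' i))
      ≤ Real.sqrt 3 * specNorm Wv *
          Real.sqrt (specNorm A ^ 2 * r ^ 4 * (4 * n + 1) + n) * frob (X - X') := by
  set M : Matrix (Fin s') (Fin n) ℝ :=
    Matrix.of (fun i l => satt A Wv (fun i' => X i' l) X i) -
      Matrix.of (fun i l => satt A Wv (fun i' => X' i' l) X' i) with hMdef
  set D : ℝ := frob (X - X') with hDdef
  set cA : ℝ := specNorm A with hcAdef
  set sW : ℝ := specNorm Wv with hsWdef
  have hD : 0 ≤ D := frob_nonneg' _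
  have hcA : 0 ≤ cA := specNorm_nonneg' _
  have hsW : 0 ≤ sW := specNorm_nonneg' _
  have hr' : (0:ℝ) ≤ r := hr.le
  -- column bound
  have hcol : ∀ l : Fin n, eucNorm (fun i => M i l)
      ≤ sW * (D + cA * r^2 * D + cA * r^2 * eucNorm (fun i => (X - X') i l)) := by
    intro l
    set x : Fin d → ℝ := fun i' => X i' l with hxdef
    set x' : Fin d → ℝ := fun i' => X' i' l with hx'def
    set zX : Fin n → ℝ := fun j' => dotProduct (fun i => X i j') (A.mulVec x) with hzX
    set zX' : Fin n → ℝ := fun j' => dotProduct (fun i => X' i j') (A.mulVec x') with hzX'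
    set p : Fin n → ℝ := softmax zX with hpdef
    set p' : Fin n → ℝ := softmax zX' with hp'def
    set δ : ℝ := eucNorm (fun i => (X - X') i l) with hδdef
    have hδ : 0 ≤ δ := eucNorm_nonneg' _
    -- rewrite the column
    have h1 : (fun i => M i l) = Wv.mulVec (X.mulVec p - X'.mulVec p') := by
      rw [Matrix.mulVec_sub]
      funext i
      show satt A Wv x X i - satt A Wv x' X' i = _
      rw [satt_eq, satt_eq]
      rfl
    -- split
    have h2 : X.mulVec p - X'.mulVec p' = (X - X').mulVec p + X'.mulVec (p - p') := by
      rw [Matrix.sub_mulVec, Matrix.mulVec_sub]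
      abel
    -- bound on softmax difference
    have hq : eucNorm (p - p') ≤ cA * r * D + cA * r * δ := by
      have lip : eucNorm (fun j => p j - p' j) ≤ eucNorm (fun j => zX j - zX' j) :=
        softmax_lipschitz hn zX zX'
      have hz : (fun j => zX j - zX' j) =
          (X - X').transpose.mulVec (A.mulVec x) +
            X'.transpose.mulVec (fun i => A.mulVec x i - A.mulVec x' i) :=
        zdiff_eq X X' (A.mulVec x) (A.mulVec x')
      have hAsub : (fun i => A.mulVec x i - A.mulVec x' i)
          = A.mulVec (fun i => x i - x' i) := by
        funext i
        simp only [Matrix.mulVec, dotProduct]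
        rw [← Finset.sum_sub_distrib]
        exact Finset.sum_congr rfl fun k _ => by ring
      have e1 : eucNorm ((X - X').transpose.mulVec (A.mulVec x)) ≤ D * (cA * r) := by
        calc eucNorm ((X - X').transpose.mulVec (A.mulVec x))
            ≤ frob (X - X').transpose * eucNorm (A.mulVec x) :=
              eucNorm_mulVec_le_frob _ _
          _ ≤ D * (cA * r) := by
              rw [frob_transpose]
              apply mul_le_mul_of_nonneg_left _ hD
              calc eucNorm (A.mulVec x) ≤ cA * eucNorm x := eucNorm_mulVec_le A x
                _ ≤ cA * r := by
                    apply mul_le_mul_of_nonneg_left _ hcA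
                    exact le_trans (col_le_frob X l) hX
      have e2 : eucNorm (X'.transpose.mulVec (A.mulVec (fun i => x i - x' i)))
          ≤ r * (cA * δ) := by
        calc eucNorm (X'.transpose.mulVec (A.mulVec (fun i => x i - x' i)))
            ≤ frob X'.transpose * eucNorm (A.mulVec (fun i => x i - x' i)) :=
              eucNorm_mulVec_le_frob _ _
          _ ≤ r * (cA * δ) := by
              rw [frob_transpose]
              apply mul_le_mul (le_trans (le_refl _) hX') _ (eucNorm_nonneg' _) hr'
              calc eucNorm (A.mulVec (fun i => x i - x' i))
                  ≤ cA * eucNorm (fun i => x i - x' i) := eucNorm_mulVec_le A _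
                _ = cA * δ := by
                    congr 1
      have hzb : eucNorm (fun j => zX j - zX' j) ≤ D * (cA * r) + r * (cA * δ) := by
        rw [hz, hAsub]
        calc eucNorm ((X - X').transpose.mulVec (A.mulVec x) +
              X'.transpose.mulVec (A.mulVec (fun i => x i - x' i)))
            ≤ eucNorm ((X - X').transpose.mulVec (A.mulVec x)) +
              eucNorm (X'.transpose.mulVec (A.mulVec (fun i => x i - x' i))) :=
              eucNorm_add_le' _ _
          _ ≤ D * (cA * r) + r * (cA * δ) := add_le_add e1 e2
      have : eucNorm (p - p') = eucNorm (fun j => p j - p' j) := rfl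
      rw [this]
      calc eucNorm (fun j => p j - p' j) ≤ eucNorm (fun j => zX j - zX' j) := lip
        _ ≤ D * (cA * r) + r * (cA * δ) := hzb
        _ = cA * r * D + cA * r * δ := by ring
    -- combine
    have ha : eucNorm (X.mulVec p - X'.mulVec p') ≤ D + r * (cA * r * D + cA * r * δ) := by
      rw [h2]
      calc eucNorm ((X - X').mulVec p + X'.mulVec (p - p'))
          ≤ eucNorm ((X - X').mulVec p) + eucNorm (X'.mulVec (p - p')) := eucNorm_add_le' _ _
        _ ≤ D * 1 + r * (cA * r * D + cA * r * δ) := by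
            apply add_le_add
            · calc eucNorm ((X - X').mulVec p) ≤ frob (X - X') * eucNorm p :=
                    eucNorm_mulVec_le_frob _ _
                _ ≤ D * 1 := mul_le_mul_of_nonneg_left (eucNorm_softmax_le_one hn zX) hD
            · calc eucNorm (X'.mulVec (p - p')) ≤ frob X' * eucNorm (p - p') :=
                    eucNorm_mulVec_le_frob _ _
                _ ≤ r * (cA * r * D + cA * r * δ) :=
                    mul_le_mul hX' hq (eucNorm_nonneg' _) hr'
        _ = D + r * (cA * r * D + cA * r * δ) := by ring
    rw [h1]
    calc eucNorm (Wv.mulVec (X.mulVec p - X'.mulVec p'))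
        ≤ sW * eucNorm (X.mulVec p - X'.mulVec p') := eucNorm_mulVec_le Wv _
      _ ≤ sW * (D + r * (cA * r * D + cA * r * δ)) :=
          mul_le_mul_of_nonneg_left ha hsW
      _ = sW * (D + cA * r^2 * D + cA * r^2 * δ) := by ring
  -- sum over columns
  have hdelta_sum : ∑ l, (eucNorm (fun i => (X - X') i l))^2 = D^2 :=
    (frob_sq_eq_sum_col (X - X')).symm
  have hsum : frob M ^ 2 ≤ 3 * sW^2 * (cA^2 * r^4 * (4*(n:ℝ)+1) + (n:ℝ)) * D^2 := by
    rw [frob_sq_eq_sum_col]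
    have perl : ∀ l : Fin n, (eucNorm (fun i => M i l))^2
        ≤ 3*sW^2*(D^2 + (cA*r^2*D)^2 + (cA*r^2)^2 * (eucNorm (fun i => (X - X') i l))^2) := by
      intro l
      set δ : ℝ := eucNorm (fun i => (X - X') i l) with hδdef
      have h3 : (D + cA*r^2*D + cA*r^2*δ)^2
          ≤ 3*(D^2 + (cA*r^2*D)^2 + (cA*r^2*δ)^2) := by
        nlinarith [sq_nonneg (D - cA*r^2*D), sq_nonneg (cA*r^2*D - cA*r^2*δ),
          sq_nonneg (D - cA*r^2*δ)]
      calc (eucNorm (fun i => M i l))^2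
          ≤ (sW * (D + cA*r^2*D + cA*r^2*δ))^2 :=
            pow_le_pow_left₀ (eucNorm_nonneg' _) (hcol l) 2
        _ = sW^2 * (D + cA*r^2*D + cA*r^2*δ)^2 := by ring
        _ ≤ sW^2 * (3*(D^2 + (cA*r^2*D)^2 + (cA*r^2*δ)^2)) :=
            mul_le_mul_of_nonneg_left h3 (sq_nonneg sW)
        _ = 3*sW^2*(D^2 + (cA*r^2*D)^2 + (cA*r^2)^2 * δ^2) := by ring
    calc ∑ l, (eucNorm (fun i => M i l))^2
        ≤ ∑ l : Fin n, 3*sW^2*(D^2 + (cA*r^2*D)^2 +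
            (cA*r^2)^2 * (eucNorm (fun i => (X - X') i l))^2) :=
          Finset.sum_le_sum fun l _ => perl l
      _ = 3*sW^2*((n:ℝ)*(D^2 + (cA*r^2*D)^2) + (cA*r^2)^2 * D^2) := by
          rw [← Finset.mul_sum]
          congr 1
          rw [Finset.sum_add_distrib, Finset.sum_add_distrib, ← Finset.mul_sum, hdelta_sum]
          simp [Finset.sum_const, Finset.card_univ]
          ring
      _ ≤ 3 * sW^2 * (cA^2 * r^4 * (4*(n:ℝ)+1) + (n:ℝ)) * D^2 := by
          have hnn : (0:ℝ) ≤ (n:ℝ) := Nat.cast_nonneg n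
          have key : (0:ℝ) ≤ sW^2 * (cA^2 * r^4 * D^2 * (n:ℝ)) := by positivity
          nlinarith [key]
  -- conclude
  have hE : (0:ℝ) ≤ cA^2 * r^4 * (4*(n:ℝ)+1) + (n:ℝ) := by positivity
  have hRHS : 0 ≤ Real.sqrt 3 * sW * Real.sqrt (cA^2 * r^4 * (4*(n:ℝ)+1) + (n:ℝ)) * D := by
    have := Real.sqrt_nonneg (3:ℝ)
    have := Real.sqrt_nonneg (cA^2 * r^4 * (4*(n:ℝ)+1) + (n:ℝ))
    positivity
  have hRHS_sq : (Real.sqrt 3 * sW * Real.sqrt (cA^2 * r^4 * (4*(n:ℝ)+1) + (n:ℝ)) * D)^2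
      = 3 * sW^2 * (cA^2 * r^4 * (4*(n:ℝ)+1) + (n:ℝ)) * D^2 := by
    have h1 : Real.sqrt 3 ^ 2 = 3 := Real.sq_sqrt (by norm_num)
    have h2 : Real.sqrt (cA^2 * r^4 * (4*(n:ℝ)+1) + (n:ℝ)) ^ 2
        = cA^2 * r^4 * (4*(n:ℝ)+1) + (n:ℝ) := Real.sq_sqrt hE
    calc (Real.sqrt 3 * sW * Real.sqrt (cA^2 * r^4 * (4*(n:ℝ)+1) + (n:ℝ)) * D)^2
        = Real.sqrt 3 ^ 2 * sW^2 * Real.sqrt (cA^2 * r^4 * (4*(n:ℝ)+1) + (n:ℝ)) ^ 2 * D^2 := by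
          ring
      _ = 3 * sW^2 * (cA^2 * r^4 * (4*(n:ℝ)+1) + (n:ℝ)) * D^2 := by rw [h1, h2]
  have final := Real.sqrt_le_sqrt (le_trans hsum (le_of_eq hRHS_sq.symm))
  rwa [Real.sqrt_sq (frob_nonneg' M), Real.sqrt_sq hRHS] at final
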